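/- arXiv:1604.02730 — 4 statements merged into one kernel-verified Lean document; each statement's English description precedes it below -/
import Mathlib

section
/- Let n = 2k+1 and π : Z_2^k → Z_2^k be a permutation. Define g(x,y) = (j, π(x))·y on Z_2^k × Z_2^{k+1} for j ∈ {0,1}. Then g is a semi-bent function, i.e., W_g(ω) ∈ {0, 2^{k+1}, -2^{k+1}} for all ω ∈ Z_2^{n}. -/
open Finset

def dotp {k : ℕ} (a b : Fin k → ZMod 2) : ZMod 2 := ∑ i, a i * b i

def walsh {n : ℕ} (f : (Fin n → ZMod 2) → ZMod 2) (ω : Fin n → ZMod 2) : ℤ :=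
  ∑ x : Fin n → ZMod 2, (-1 : ℤ) ^ (f x + dotp ω x).val

def walsh2 {k m : ℕ} (f : (Fin k → ZMod 2) → (Fin m → ZMod 2) → ZMod 2)
    (ω₁ : Fin k → ZMod 2) (ω₂ : Fin m → ZMod 2) : ℤ :=
  ∑ x : Fin k → ZMod 2, ∑ y : Fin m → ZMod 2,
    (-1 : ℤ) ^ (f x y + dotp ω₁ x + dotp ω₂ y).val

lemma chi_add : ∀ a b : ZMod 2, (-1:ℤ)^(a+b).val = (-1:ℤ)^a.val * (-1:ℤ)^b.val := by decide

lemma chi_sum {ι : Type*} (s : Finset ι) (f : ι → ZMod 2) :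
    (-1:ℤ)^((∑ i ∈ s, f i).val) = ∏ i ∈ s, (-1:ℤ)^(f i).val := by
  induction s using Finset.cons_induction with
  | empty => simp
  | cons a s ha ih => rw [Finset.sum_cons, Finset.prod_cons, chi_add, ih]

lemma sum_chi_single : ∀ c : ZMod 2,
    ∑ t : ZMod 2, (-1:ℤ)^(c*t).val = if c = 0 then 2 else 0 := by decide

lemma zmod2_add_eq_zero : ∀ a b : ZMod 2, a + b = 0 ↔ a = b := by decide

lemma sum_chi {m : ℕ} (a : Fin m → ZMod 2) :
    ∑ y : Fin m → ZMod 2, (-1:ℤ)^(dotp a y).val = if a = 0 then 2^m else 0 := by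
  have h1 : ∀ y : Fin m → ZMod 2, (-1:ℤ)^(dotp a y).val = ∏ i, (-1:ℤ)^(a i * y i).val :=
    fun y => chi_sum _ _
  simp_rw [h1]
  rw [← Fintype.piFinset_univ,
    ← Finset.prod_univ_sum (fun _ : Fin m => (univ : Finset (ZMod 2)))
      (fun i t => (-1:ℤ)^(a i * t).val)]
  simp_rw [sum_chi_single]
  by_cases h : a = 0
  · subst h; simp
  · rw [if_neg h]
    obtain ⟨i, hi⟩ := Function.ne_iff.mp h
    simp only [Pi.zero_apply] at hi
    exact Finset.prod_eq_zero (mem_univ i) (by simp [hi])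

theorem stmt2 (k : ℕ) (π : Equiv.Perm (Fin k → ZMod 2)) (j : ZMod 2)
    (ω₁ : Fin k → ZMod 2) (ω₂ : Fin (k + 1) → ZMod 2) :
    walsh2 (fun x y => dotp (Fin.cons j (π x)) y) ω₁ ω₂ ∈
      ({0, 2 ^ (k + 1), -(2 ^ (k + 1))} : Set ℤ) := by
  unfold walsh2
  have hd : ∀ (x : Fin k → ZMod 2) (y : Fin (k+1) → ZMod 2),
      dotp (Fin.cons j (π x)) y + dotp ω₁ x + dotp ω₂ y
        = dotp ω₁ x + dotp (Fin.cons j (π x) + ω₂) y := by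
    intro x y
    simp only [dotp, Pi.add_apply, add_mul, Finset.sum_add_distrib]
    ring
  simp only [hd, chi_add]
  simp_rw [← Finset.mul_sum, sum_chi]
  set x₀ := π.symm (Fin.tail ω₂) with hx₀
  have key : ∀ x : Fin k → ZMod 2,
      (Fin.cons j (π x) + ω₂ = 0) ↔ (ω₂ 0 = j ∧ x = x₀) := by
    intro x
    constructor
    · intro h
      have heq : Fin.cons j (π x) = ω₂ := by
        funext i
        exact (zmod2_add_eq_zero _ _).mp (congrFun h i)
      have h0 : ω₂ 0 = j := by rw [← heq]; simp
      have ht : Fin.tail ω₂ = π x := by rw [← heq]; simp [Fin.tail_cons]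
      exact ⟨h0, by rw [hx₀, ht]; simp⟩
    · rintro ⟨h0, rfl⟩
      have hc : Fin.cons j (π x₀) = ω₂ := by
        rw [hx₀, Equiv.apply_symm_apply, ← h0, Fin.cons_self_tail]
      rw [hc]
      funext i
      simp only [Pi.add_apply, Pi.zero_apply]
      exact (zmod2_add_eq_zero _ _).mpr rfl
  simp_rw [key]
  by_cases hj : ω₂ 0 = j
  · simp only [hj, true_and, mul_ite, mul_zero]
    rw [Finset.sum_ite_eq' univ x₀]
    simp only [mem_univ, if_true]
    have hv : (dotp ω₁ x₀).val = 0 ∨ (dotp ω₁ x₀).val = 1 := by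
      have := ZMod.val_lt (dotp ω₁ x₀); omega
    rcases hv with h | h <;> rw [h] <;> simp [Set.mem_insert_iff]
  · simp [hj]
end

section
/- Let k ≥ 1, and let π, σ : Z_2^k → Z_2^k be maps. Define f(x,y) = (i, π(x))·y and g(x,y) = (i', σ(x))·y on Z_2^k × Z_2^{k+1} for i, i' ∈ {0,1}. If π is a permutation, i' = 1, and π ⊕ σ (pointwise XOR) is a permutation of Z_2^k, then f and f ⊕ g are disjoint spectra functions, i.e., W_f(ω) · W_{f⊕g}(ω) = 0 for all ω ∈ Z_2^{2k+1}. -/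
open Finset

lemma dotp_add_left {k : ℕ} (a b y : Fin k → ZMod 2) :
    dotp (a + b) y = dotp a y + dotp b y := by
  simp [dotp, add_mul, Finset.sum_add_distrib]

lemma dotp_add_right {k : ℕ} (a y z : Fin k → ZMod 2) :
    dotp a (y + z) = dotp a y + dotp a z := by
  simp [dotp, mul_add, Finset.sum_add_distrib]

lemma neg_pow_add (a b : ZMod 2) :
    (-1 : ℤ) ^ ((a + b).val) = (-1) ^ a.val * (-1) ^ b.val := by
  revert a b; decide

lemma dotp_single {k : ℕ} (c : Fin k → ZMod 2) (i : Fin k) :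
    dotp c (Pi.single i 1) = c i := by
  simp [dotp, Pi.single_apply, Finset.sum_ite_eq']

lemma sum_neg_pow_dotp {m : ℕ} (c : Fin m → ZMod 2) (hc : c ≠ 0) :
    ∑ y : Fin m → ZMod 2, (-1 : ℤ) ^ (dotp c y).val = 0 := by
  obtain ⟨i, hi⟩ : ∃ i, c i ≠ 0 := by
    by_contra h
    push_neg at h
    exact hc (funext fun j => h j)
  have hci : c i = 1 := by revert hi; generalize c i = v; revert v; decide
  apply Finset.sum_ninvolution (g := fun y => y + Pi.single i 1)
  · intro y
    rw [dotp_add_right, dotp_single, hci]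
    generalize dotp c y = v
    revert v; decide
  · intro y _
    intro heq
    have := congrFun heq i
    simp at this
  · intro y; exact Finset.mem_univ _
  · intro y
    funext j
    by_cases hji : j = i <;> simp [hji, Pi.single_apply]
    generalize y i = v
    revert v; decide

lemma key {m : ℕ} (a ω₂ : Fin m → ZMod 2) (h : a ≠ ω₂) (t : ZMod 2) :
    ∑ y : Fin m → ZMod 2, (-1 : ℤ) ^ ((dotp a y + t + dotp ω₂ y).val) = 0 := by
  have hne : a + ω₂ ≠ 0 := by
    intro h0
    apply h
    funext j
    have := congrFun h0 j
    simp only [Pi.add_apply, Pi.zero_apply] at this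
    revert this
    generalize a j = u; generalize ω₂ j = v
    revert u v; decide
  calc ∑ y : Fin m → ZMod 2, (-1 : ℤ) ^ ((dotp a y + t + dotp ω₂ y).val)
      = ∑ y : Fin m → ZMod 2, (-1 : ℤ) ^ ((dotp (a + ω₂) y).val) * (-1) ^ t.val := by
        apply Finset.sum_congr rfl
        intro y _
        rw [dotp_add_left, ← neg_pow_add]
        ring_nf
    _ = (∑ y : Fin m → ZMod 2, (-1 : ℤ) ^ ((dotp (a + ω₂) y).val)) * (-1) ^ t.val := by
        rw [Finset.sum_mul]
    _ = 0 := by rw [sum_neg_pow_dotp _ hne, zero_mul]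

theorem stmt3 (k : ℕ) (hk : 1 ≤ k) (π σ : (Fin k → ZMod 2) → (Fin k → ZMod 2))
    (i i' : ZMod 2) (hπ : Function.Bijective π) (hi' : i' = 1)
    (hπσ : Function.Bijective (fun x => π x + σ x))
    (ω₁ : Fin k → ZMod 2) (ω₂ : Fin (k + 1) → ZMod 2) :
    walsh2 (fun x y => dotp (Fin.cons i (π x)) y) ω₁ ω₂ *
      walsh2 (fun x y => dotp (Fin.cons i (π x)) y + dotp (Fin.cons i' (σ x)) y) ω₁ ω₂ = 0 := by
  by_cases h : ω₂ 0 = i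
  · -- second factor is zero
    have : walsh2 (fun x y => dotp (Fin.cons i (π x)) y + dotp (Fin.cons i' (σ x)) y) ω₁ ω₂ = 0 := by
      unfold walsh2
      apply Finset.sum_eq_zero
      intro x _
      have hsum : ∀ y : Fin (k+1) → ZMod 2,
          dotp (Fin.cons i (π x)) y + dotp (Fin.cons i' (σ x)) y
            = dotp (Fin.cons i (π x) + Fin.cons i' (σ x)) y := by
        intro y; rw [dotp_add_left]
      simp only [hsum]
      apply key
      intro heq
      have := congrFun heq 0
      simp [Fin.cons, h, hi'] at this
    rw [this, mul_zero]
  · -- first factor is zero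
    have : walsh2 (fun x y => dotp (Fin.cons i (π x)) y) ω₁ ω₂ = 0 := by
      unfold walsh2
      apply Finset.sum_eq_zero
      intro x _
      apply key
      intro heq
      have := congrFun heq 0
      simp [Fin.cons] at this
      exact h this.symm
    rw [this, zero_mul]
end

section
/- Let π, σ : Z_2^k → Z_2^k and i, i' ∈ {0,1}. Define f(x,y) = (i, π(x))·y and g(x,y) = (i', σ(x))·y on Z_2^k × Z_2^{k+1}. If π ⊕ σ is a permutation of Z_2^k, then f ⊕ g is a semi-bent function on 2k+1 variables, i.e., its Walsh spectrum lies in {0, ±2^{k+1}}. -/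
open Finset

lemma chi_vals : ∀ a : ZMod 2, (-1:ℤ)^a.val = 1 ∨ (-1:ℤ)^a.val = -1 := by decide

lemma chi_single : ∀ c : ZMod 2,
    ∑ b : ZMod 2, (-1:ℤ)^(c*b).val = if c = 0 then 2 else 0 := by decide

lemma dotp_cons {m : ℕ} (v : Fin (m+1) → ZMod 2) (b : ZMod 2) (t : Fin m → ZMod 2) :
    dotp v (Fin.cons b t) = v 0 * b + dotp (Fin.tail v) t := by
  simp [dotp, Fin.sum_univ_succ, Fin.tail]

lemma chi_sum_s4 {m : ℕ} (v : Fin m → ZMod 2) :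
    ∑ y : Fin m → ZMod 2, (-1:ℤ)^(dotp v y).val = if v = 0 then 2^m else 0 := by
  induction m with
  | zero =>
      have hv : v = 0 := funext fun j => j.elim0
      simp [hv, dotp]
  | succ m ih =>
      rw [← (Fin.consEquiv (fun _ => ZMod 2)).sum_comp]
      rw [Fintype.sum_prod_type]
      have : ∀ b : ZMod 2, ∀ t : Fin m → ZMod 2,
          (-1:ℤ)^(dotp v (Fin.cons b t)).val
            = (-1:ℤ)^(v 0 * b).val * (-1:ℤ)^(dotp (Fin.tail v) t).val := by
        intro b t; rw [show dotp v (Fin.cons b t) = v 0 * b + dotp (Fin.tail v) t from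
          dotp_cons v b t, chi_add]
      simp only [Fin.consEquiv, Equiv.coe_fn_mk, this, ← Finset.mul_sum, ih, ← Finset.sum_mul, chi_single]
      by_cases h0 : v 0 = 0
      · by_cases ht : Fin.tail v = 0
        · have hv : v = 0 := by
            funext j
            refine Fin.cases ?_ ?_ j
            · exact h0
            · intro j; exact congrFun ht j
          rw [if_pos h0, if_pos ht, if_pos hv]; ring
        · have hv : v ≠ 0 := fun h => ht (by funext j; simp [Fin.tail, h])
          simp [h0, ht, hv]
      · have hv : v ≠ 0 := fun h => h0 (by simp [h])
        simp [h0, hv]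

theorem stmt4 (k : ℕ) (π σ : (Fin k → ZMod 2) → (Fin k → ZMod 2)) (i i' : ZMod 2)
    (hπσ : Function.Bijective (fun x => π x + σ x))
    (ω₁ : Fin k → ZMod 2) (ω₂ : Fin (k + 1) → ZMod 2) :
    walsh2 (fun x y => dotp (Fin.cons i (π x)) y + dotp (Fin.cons i' (σ x)) y) ω₁ ω₂ ∈
      ({0, 2 ^ (k + 1), -(2 ^ (k + 1))} : Set ℤ) := by
  classical
  have hadd_eq : ∀ a b : Fin (k+1) → ZMod 2, a + b = 0 ↔ a = b := by
    intro a b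
    constructor
    · intro h
      funext j
      have := congrFun h j
      revert this
      have : ∀ p q : ZMod 2, p + q = 0 → p = q := by decide
      exact this _ _
    · intro h; subst h; funext j; exact (by decide : ∀ p : ZMod 2, p + p = 0) _
  have key : walsh2 (fun x y => dotp (Fin.cons i (π x)) y + dotp (Fin.cons i' (σ x)) y) ω₁ ω₂
      = ∑ x : Fin k → ZMod 2, (-1:ℤ)^(dotp ω₁ x).val *
          (if Fin.cons (i+i') (π x + σ x) = ω₂ then (2:ℤ)^(k+1) else 0) := by
    unfold walsh2
    refine Finset.sum_congr rfl fun x _ => ?_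
    have hcons : Fin.cons i (π x) + Fin.cons i' (σ x)
        = (Fin.cons (i+i') (π x + σ x) : Fin (k+1) → ZMod 2) := by
      funext j
      refine Fin.cases ?_ ?_ j <;> simp
    have hexp : ∀ y : Fin (k+1) → ZMod 2,
        dotp (Fin.cons i (π x)) y + dotp (Fin.cons i' (σ x)) y + dotp ω₁ x + dotp ω₂ y
          = dotp ω₁ x + dotp (Fin.cons (i+i') (π x + σ x) + ω₂) y := by
      intro y
      rw [dotp_add_left, ← dotp_add_left, hcons]
      ring
    calc ∑ y : Fin (k+1) → ZMod 2, (-1:ℤ) ^ ((dotp (Fin.cons i (π x)) y + dotp (Fin.cons i' (σ x)) y) + dotp ω₁ x + dotp ω₂ y).val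
        = ∑ y : Fin (k+1) → ZMod 2, (-1:ℤ)^(dotp ω₁ x).val * (-1:ℤ)^(dotp (Fin.cons (i+i') (π x + σ x) + ω₂) y).val := by
          refine Finset.sum_congr rfl fun y _ => ?_
          rw [hexp y, chi_add]
      _ = (-1:ℤ)^(dotp ω₁ x).val * (if Fin.cons (i+i') (π x + σ x) = ω₂ then (2:ℤ)^(k+1) else 0) := by
          rw [← Finset.mul_sum, chi_sum_s4]
          simp only [hadd_eq]
  rw [key]
  by_cases hi : i + i' = ω₂ 0
  · obtain ⟨x₀, hx₀, hxu⟩ := hπσ.existsUnique (Fin.tail ω₂)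
    have hcond : ∀ x, (Fin.cons (i+i') (π x + σ x) = ω₂) ↔ x = x₀ := by
      intro x
      constructor
      · intro h
        apply hxu
        have := congrFun h
        funext j
        have := congrFun h j.succ
        simpa [Fin.tail] using this
      · intro h
        subst h
        funext j
        refine Fin.cases ?_ ?_ j
        · simpa using hi
        · intro j
          have := congrFun hx₀ j
          simpa [Fin.tail] using this
    have : ∑ x : Fin k → ZMod 2, (-1:ℤ)^(dotp ω₁ x).val *
          (if Fin.cons (i+i') (π x + σ x) = ω₂ then (2:ℤ)^(k+1) else 0)
        = (-1:ℤ)^(dotp ω₁ x₀).val * (2:ℤ)^(k+1) := by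
      rw [Finset.sum_eq_single x₀]
      · simp [hcond]
      · intro x _ hx
        simp [hcond, hx]
      · intro h; exact absurd (Finset.mem_univ x₀) h
    rw [this]
    rcases chi_vals (dotp ω₁ x₀) with h | h <;> rw [h] <;> simp
  · have : ∀ x : Fin k → ZMod 2, Fin.cons (i+i') (π x + σ x) ≠ ω₂ := by
      intro x h
      exact hi (by simpa using congrFun h 0)
    simp only [this, if_neg, if_false, mul_zero, Finset.sum_const_zero]
    left; rfl
end

section
/- Let n be even and f : Z_2^n → Z_4 given by f(x) = a_0(x) + 2a_1(x) for Boolean a_0, a_1. Then f is generalized bent (|H_f(ω)| = 2^{n/2} for all ω) if and only if both a_1 and a_1 ⊕ a_0 are bent Boolean functions. -/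
open Finset

/-!
Since `i ^ (u + 2v) = (1 + i)/2 · (-1)^v + (1 - i)/2 · (-1)^(v + u)` for bits `u, v`, the
generalized transform splits as `H_f = ((1 + i) W_{a₁} + (1 - i) W_{a₁ ⊕ a₀}) / 2`, whence
`|H_f|² = (W_{a₁}² + W_{a₁ ⊕ a₀}²) / 2`. So `f` is generalized bent iff
`W_{a₁}² + W_{a₁ ⊕ a₀}² = 2 · 4^k` everywhere, and by 2-adic descent the only integer solutions
of `a² + b² = 2 · 4^k` have `a² = b² = 4^k`.
-/

open Complex

lemma neg_one_pow_val_add {R : Type*} [Ring R] (a b : ZMod 2) :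
    (-1 : R) ^ (a + b).val = (-1) ^ a.val * (-1) ^ b.val := by
  rw [ZMod.val_add, ← neg_one_pow_eq_pow_mod_two, pow_add]

lemma I_pow_val_add_two_mul_val (u v : ZMod 2) :
    I ^ (u.val + 2 * v.val) = (1 + I) / 2 * (-1) ^ v.val + (1 - I) / 2 * (-1) ^ (v + u).val := by
  have zero_or_one : ∀ z : ZMod 2, z = 0 ∨ z = 1 := by decide
  rcases zero_or_one u with rfl | rfl <;> rcases zero_or_one v with rfl | rfl <;>
    simp only [ZMod.val_zero, ZMod.val_one, add_zero, zero_add,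
      show (1 + 1 : ZMod 2) = 0 from rfl] <;>
    norm_num [pow_succ, Complex.ext_iff]

/-- The generalized Walsh–Hadamard transform `H_f(ω)` of `f = a₀ + 2 a₁ : ℤ₂ⁿ → ℤ₄`. -/
noncomputable def genWalsh {n : ℕ} (a0 a1 : (Fin n → ZMod 2) → ZMod 2) (ω : Fin n → ZMod 2) : ℂ :=
  ∑ x, I ^ ((a0 x).val + 2 * (a1 x).val) * (-1 : ℂ) ^ (dotp ω x).val

lemma genWalsh_eq_walsh {n : ℕ} (a0 a1 : (Fin n → ZMod 2) → ZMod 2) (ω : Fin n → ZMod 2) :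
    genWalsh a0 a1 ω =
      (1 + I) / 2 * walsh a1 ω + (1 - I) / 2 * walsh (fun x => a1 x + a0 x) ω := by
  simp only [genWalsh, walsh, Int.cast_sum, Int.cast_pow, Int.cast_neg, Int.cast_one, mul_sum,
    ← sum_add_distrib]
  refine sum_congr rfl fun x _ => ?_
  simp only [I_pow_val_add_two_mul_val, neg_one_pow_val_add]
  ring

lemma norm_sq_one_add_I_mul_add_one_sub_I_mul (a b : ℤ) :
    ‖(1 + I) / 2 * a + (1 - I) / 2 * b‖ ^ 2 = ((a : ℝ) ^ 2 + b ^ 2) / 2 := by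
  rw [Complex.sq_norm, normSq_apply]
  simp
  ring

lemma norm_genWalsh_eq_two_pow_iff {n : ℕ} (k : ℕ) (a0 a1 : (Fin n → ZMod 2) → ZMod 2)
    (ω : Fin n → ZMod 2) :
    ‖genWalsh a0 a1 ω‖ = 2 ^ k ↔
      walsh a1 ω ^ 2 + walsh (fun x => a1 x + a0 x) ω ^ 2 = 2 * (2 ^ k) ^ 2 := by
  rw [← pow_left_inj₀ (norm_nonneg _) (by positivity) two_ne_zero, genWalsh_eq_walsh,
    norm_sq_one_add_I_mul_add_one_sub_I_mul, div_eq_iff two_ne_zero, mul_comm]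
  exact_mod_cast Iff.rfl

lemma even_and_even_of_four_dvd_sq_add_sq {a b : ℤ} (h : 4 ∣ a ^ 2 + b ^ 2) :
    Even a ∧ Even b := by
  obtain ⟨a', rfl | rfl⟩ := Int.even_or_odd' a <;> obtain ⟨b', rfl | rfl⟩ := Int.even_or_odd' b
  · exact ⟨even_two_mul a', even_two_mul b'⟩
  all_goals exfalso; ring_nf at h; omega

lemma sq_eq_and_sq_eq_of_sq_add_sq_eq (k : ℕ) {a b : ℤ} (h : a ^ 2 + b ^ 2 = 2 * (2 ^ k) ^ 2) :
    a ^ 2 = (2 ^ k) ^ 2 ∧ b ^ 2 = (2 ^ k) ^ 2 := by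
  induction k generalizing a b with
  | zero =>
    have ha : a ^ 2 ≤ 2 := by nlinarith
    have hb : b ^ 2 ≤ 2 := by nlinarith
    obtain ⟨ha₁, ha₂⟩ : -1 ≤ a ∧ a ≤ 1 := by constructor <;> nlinarith
    obtain ⟨hb₁, hb₂⟩ : -1 ≤ b ∧ b ≤ 1 := by constructor <;> nlinarith
    interval_cases a <;> interval_cases b <;> simp_all
  | succ k ih =>
    rw [pow_succ' (2 : ℤ)] at h ⊢
    obtain ⟨⟨a', rfl⟩, ⟨b', rfl⟩⟩ := even_and_even_of_four_dvd_sq_add_sq (a := a) (b := b)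
      ⟨2 * (2 ^ k) ^ 2, by linear_combination h⟩
    obtain ⟨ha', hb'⟩ := ih (a := a') (b := b') (by linarith)
    exact ⟨by linear_combination 4 * ha', by linear_combination 4 * hb'⟩

theorem stmt15 (k : ℕ) (a0 a1 : (Fin (2 * k) → ZMod 2) → ZMod 2) :
    (∀ ω : Fin (2 * k) → ZMod 2,
        ‖(∑ x : Fin (2 * k) → ZMod 2,
            Complex.I ^ ((a0 x).val + 2 * (a1 x).val) * (-1 : ℂ) ^ (dotp ω x).val)‖
          = 2 ^ k)
      ↔ ((∀ ω, walsh a1 ω = 2 ^ k ∨ walsh a1 ω = -(2 ^ k)) ∧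
         (∀ ω, walsh (fun x => a1 x + a0 x) ω = 2 ^ k ∨
            walsh (fun x => a1 x + a0 x) ω = -(2 ^ k))) := by
  rw [← forall_and]
  refine forall_congr' fun ω => (norm_genWalsh_eq_two_pow_iff k a0 a1 ω).trans ?_
  rw [← sq_eq_sq_iff_eq_or_eq_neg, ← sq_eq_sq_iff_eq_or_eq_neg]
  exact ⟨sq_eq_and_sq_eq_of_sq_add_sq_eq k, fun ⟨ha, hb⟩ => by rw [ha, hb]; ring⟩
end
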